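/- For a connected graph G and vertices x ≠ q, the sum over neighbors y of x (with multiplicity given by edges) of j_x(q,y) equals 1, and if x = q this sum equals 0, where j_x(q,y) = κ₂(qy|x)/κ(G). -/

import Mathlib

open scoped Classical
open Matrix

/-- A finite multigraph without loop edges, given by endpoint maps on an edge type. -/
structure Multigraph where
  V : Type
  E : Type
  [fintV : Fintype V]
  [fintE : Fintype E]
  fst : E → V
  snd : E → V
  no_loop : ∀ e, fst e ≠ snd e

namespace Multigraph

variable (G : Multigraph)

instance : Fintype G.V := G.fintV
instance : Fintype G.E := G.fintE

/-- One step along an edge of the subgraph with edge set `S`. -/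
def step (S : Finset G.E) (u v : G.V) : Prop :=
  ∃ e ∈ S, (G.fst e = u ∧ G.snd e = v) ∨ (G.fst e = v ∧ G.snd e = u)

/-- Two vertices are in the same component of the spanning subgraph with edge set `S`. -/
def reach (S : Finset G.E) : G.V → G.V → Prop :=
  Relation.EqvGen (G.step S)

/-- Number of connected components of the spanning subgraph with edge set `S`. -/
noncomputable def ncomp (S : Finset G.E) : ℕ :=
  Nat.card (Quotient (Relation.EqvGen.setoid (G.step S)))

/-- The graph is connected. -/
def IsConnected : Prop := G.ncomp Finset.univ = 1

/-- `S` is the edge set of a spanning tree. -/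
def IsSpanningTree (S : Finset G.E) : Prop :=
  G.ncomp S = 1 ∧ S.card + 1 = Fintype.card G.V

/-- `S` is the edge set of a two-component spanning forest. -/
def IsTwoForest (S : Finset G.E) : Prop :=
  G.ncomp S = 2 ∧ S.card + 2 = Fintype.card G.V

/-- `S` is the edge set of a three-component spanning forest. -/
def IsThreeForest (S : Finset G.E) : Prop :=
  G.ncomp S = 3 ∧ S.card + 3 = Fintype.card G.V

/-- κ(G): number of spanning trees. -/
noncomputable def kappa : ℕ := Nat.card {S : Finset G.E // G.IsSpanningTree S}

/-- κ₂(G): number of two-component spanning forests. -/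
noncomputable def kappa2 : ℕ := Nat.card {S : Finset G.E // G.IsTwoForest S}

/-- κ₂(x|y): number of two-forests with `x` and `y` in different components. -/
noncomputable def kappa2Sep (x y : G.V) : ℕ :=
  Nat.card {S : Finset G.E // G.IsTwoForest S ∧ ¬ G.reach S x y}

/-- κ₂(xy|q): number of two-forests with `x`, `y` in one component, `q` in the other. -/
noncomputable def kappa2Tog (x y q : G.V) : ℕ :=
  Nat.card {S : Finset G.E // G.IsTwoForest S ∧ G.reach S x y ∧ ¬ G.reach S x q}

/-- κ₃(x|y|q): number of three-forests with `x`, `y`, `q` in pairwise distinct components. -/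
noncomputable def kappa3Sep (x y q : G.V) : ℕ :=
  Nat.card {S : Finset G.E //
    G.IsThreeForest S ∧ ¬ G.reach S x y ∧ ¬ G.reach S x q ∧ ¬ G.reach S y q}

/-- Effective resistance: r(x,y) = κ₂(x|y)/κ(G). -/
noncomputable def res (x y : G.V) : ℝ := (G.kappa2Sep x y : ℝ) / (G.kappa : ℝ)

/-- Potential kernel: j_q(x,y) = κ₂(xy|q)/κ(G). -/
noncomputable def jfun (q x y : G.V) : ℝ := (G.kappa2Tog x y q : ℝ) / (G.kappa : ℝ)

/-- Cut size |∂F| of a two-forest with edge set `S`: edges joining the two components. -/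
noncomputable def cutSize (S : Finset G.E) : ℕ :=
  Nat.card {e : G.E // ¬ G.reach S (G.fst e) (G.snd e)}

/-- The curvature vector μ. -/
noncomputable def mu (x : G.V) : ℝ :=
  1 - (1/2) * ∑ e : G.E,
    (if G.fst e = x ∨ G.snd e = x then G.res (G.fst e) (G.snd e) else 0)

/-- The Laplacian matrix of `G`. -/
noncomputable def lap : Matrix G.V G.V ℝ := fun v w =>
  (if v = w then (Nat.card {e : G.E // G.fst e = v ∨ G.snd e = v} : ℝ) else 0)
    - (Nat.card {e : G.E // (G.fst e = v ∧ G.snd e = w) ∨ (G.fst e = w ∧ G.snd e = v)} : ℝ)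

/-- The effective resistance matrix of `G`. -/
noncomputable def resMatrix : Matrix G.V G.V ℝ := fun v w => G.res v w

end Multigraph

namespace Multigraph

variable {G : Multigraph}

/-- `e` joins `u` and `v`. -/
def Joins (G : Multigraph) (e : G.E) (u v : G.V) : Prop :=
  (G.fst e = u ∧ G.snd e = v) ∨ (G.fst e = v ∧ G.snd e = u)

lemma joins_symm {e : G.E} {u v : G.V} (h : G.Joins e u v) : G.Joins e v u := by
  rcases h with h | h
  · exact Or.inr h
  · exact Or.inl h

lemma step_iff {S : Finset G.E} {u v : G.V} :
    G.step S u v ↔ ∃ e ∈ S, G.Joins e u v := Iff.rfl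

lemma step_symm {S : Finset G.E} {u v : G.V} (h : G.step S u v) : G.step S v u := by
  obtain ⟨e, he, hj⟩ := h
  exact ⟨e, he, joins_symm hj⟩

lemma reach_refl (S : Finset G.E) (u : G.V) : G.reach S u u :=
  Relation.EqvGen.refl u

lemma reach_symm {S : Finset G.E} {u v : G.V} (h : G.reach S u v) : G.reach S v u :=
  Relation.EqvGen.symm _ _ h

lemma reach_trans {S : Finset G.E} {u v w : G.V} (h : G.reach S u v) (h' : G.reach S v w) :
    G.reach S u w := Relation.EqvGen.trans _ _ _ h h'

lemma reach_of_step {S : Finset G.E} {u v : G.V} (h : G.step S u v) : G.reach S u v :=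
  Relation.EqvGen.rel _ _ h

lemma reach_mono {S T : Finset G.E} (hST : S ⊆ T) {u v : G.V} (h : G.reach S u v) :
    G.reach T u v := by
  induction h with
  | rel a b hab => exact reach_of_step (by obtain ⟨e, he, hj⟩ := hab; exact ⟨e, hST he, hj⟩)
  | refl a => exact reach_refl _ _
  | symm a b _ ih => exact reach_symm ih
  | trans a b c _ _ ih1 ih2 => exact reach_trans ih1 ih2

lemma reach_iff_rtg {S : Finset G.E} {u v : G.V} :
    G.reach S u v ↔ Relation.ReflTransGen (G.step S) u v := by
  constructor
  · intro h
    induction h with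
    | rel a b hab => exact Relation.ReflTransGen.single hab
    | refl a => exact Relation.ReflTransGen.refl
    | symm a b _ ih =>
      exact (@Relation.ReflTransGen.stdSymm _ (G.step S) ⟨fun _ _ h => step_symm h⟩).symm _ _ ih
    | trans a b c _ _ ih1 ih2 => exact ih1.trans ih2
  · intro h
    induction h with
    | refl => exact reach_refl _ _
    | tail _ hstep ih => exact reach_trans ih (reach_of_step hstep)

lemma reach_insert_iff {S : Finset G.E} {e : G.E} {a b : G.V} (hj : G.Joins e a b)
    {u v : G.V} :
    G.reach (insert e S) u v ↔ G.reach S u v ∨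
      (G.reach S u a ∧ G.reach S b v) ∨ (G.reach S u b ∧ G.reach S a v) := by
  constructor
  · intro h
    induction h with
    | rel p r hpr =>
      obtain ⟨f, hf, hjf⟩ := hpr
      rcases Finset.mem_insert.mp hf with rfl | hfS
      · rcases hj with ⟨ha, hb⟩ | ⟨ha, hb⟩ <;> rcases hjf with ⟨hp, hr⟩ | ⟨hp, hr⟩
        · refine Or.inr (Or.inl ?_)
          rw [ha, hb] at *
          exact ⟨by rw [← hp]; exact reach_refl _ _, by rw [← hr]; exact reach_refl _ _⟩
        · refine Or.inr (Or.inr ?_)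
          rw [ha, hb] at *
          exact ⟨by rw [← hr]; exact reach_refl _ _, by rw [← hp]; exact reach_refl _ _⟩
        · refine Or.inr (Or.inr ?_)
          rw [ha, hb] at *
          exact ⟨by rw [← hp]; exact reach_refl _ _, by rw [← hr]; exact reach_refl _ _⟩
        · refine Or.inr (Or.inl ?_)
          rw [ha, hb] at *
          exact ⟨by rw [← hr]; exact reach_refl _ _, by rw [← hp]; exact reach_refl _ _⟩
      · exact Or.inl (reach_of_step ⟨f, hfS, hjf⟩)
    | refl p => exact Or.inl (reach_refl _ _)
    | symm p r _ ih =>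
      rcases ih with h | ⟨h1, h2⟩ | ⟨h1, h2⟩
      · exact Or.inl (reach_symm h)
      · exact Or.inr (Or.inr ⟨reach_symm h2, reach_symm h1⟩)
      · exact Or.inr (Or.inl ⟨reach_symm h2, reach_symm h1⟩)
    | trans p r s _ _ ih1 ih2 =>
      rcases ih1 with h | ⟨h1, h2⟩ | ⟨h1, h2⟩ <;>
        rcases ih2 with h' | ⟨h1', h2'⟩ | ⟨h1', h2'⟩
      · exact Or.inl (reach_trans h h')
      · exact Or.inr (Or.inl ⟨reach_trans h h1', h2'⟩)
      · exact Or.inr (Or.inr ⟨reach_trans h h1', h2'⟩)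
      · exact Or.inr (Or.inl ⟨h1, reach_trans h2 h'⟩)
      · exact Or.inr (Or.inl ⟨h1, h2'⟩)
      · exact Or.inl (reach_trans h1 h2')
      · exact Or.inr (Or.inr ⟨h1, reach_trans h2 h'⟩)
      · exact Or.inl (reach_trans h1 h2')
      · exact Or.inr (Or.inr ⟨h1, h2'⟩)
  · intro h
    have hsub : S ⊆ insert e S := Finset.subset_insert _ _
    have hab : G.reach (insert e S) a b :=
      reach_of_step ⟨e, Finset.mem_insert_self _ _, hj⟩
    rcases h with h | ⟨h1, h2⟩ | ⟨h1, h2⟩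
    · exact reach_mono hsub h
    · exact reach_trans (reach_trans (reach_mono hsub h1) hab) (reach_mono hsub h2)
    · exact reach_trans (reach_trans (reach_mono hsub h1) (reach_symm hab))
        (reach_mono hsub h2)

end Multigraph
namespace Multigraph

variable {G : Multigraph}

/-- Abbreviation for the component quotient. -/
noncomputable abbrev compQuot (G : Multigraph) (S : Finset G.E) :=
  Quotient (Relation.EqvGen.setoid (G.step S))

lemma ncomp_def (S : Finset G.E) : G.ncomp S = Nat.card (G.compQuot S) := rfl

noncomputable def cmk (G : Multigraph) (S : Finset G.E) (v : G.V) : G.compQuot S :=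
  Quotient.mk _ v

lemma cmk_eq_iff {S : Finset G.E} {u v : G.V} :
    G.cmk S u = G.cmk S v ↔ G.reach S u v := by
  constructor
  · intro h
    exact Quotient.exact h
  · intro h
    exact Quotient.sound h

lemma cmk_surjective (S : Finset G.E) : Function.Surjective (G.cmk S) :=
  Quotient.exists_rep

instance (S : Finset G.E) : Finite (G.compQuot S) := Quotient.finite _

lemma ncomp_insert_of_reach {S : Finset G.E} {e : G.E} {a b : G.V} (hj : G.Joins e a b)
    (hab : G.reach S a b) : G.ncomp (insert e S) = G.ncomp S := by
  have hs : Relation.EqvGen.setoid (G.step (insert e S)) =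
      Relation.EqvGen.setoid (G.step S) := by
    refine Setoid.ext fun u v => ?_
    show G.reach (insert e S) u v ↔ G.reach S u v
    rw [reach_insert_iff hj]
    constructor
    · rintro (h | ⟨h1, h2⟩ | ⟨h1, h2⟩)
      · exact h
      · exact reach_trans (reach_trans h1 hab) h2
      · exact reach_trans (reach_trans h1 (reach_symm hab)) h2
    · exact Or.inl
  unfold ncomp
  rw [hs]

lemma ncomp_insert_of_not_reach {S : Finset G.E} {e : G.E} {a b : G.V} (hj : G.Joins e a b)
    (hab : ¬ G.reach S a b) : G.ncomp (insert e S) + 1 = G.ncomp S := by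
  classical
  set Q := G.compQuot S
  set Q' := G.compQuot (insert e S)
  -- the natural map from classes ≠ [b] to Q'
  have resp : ∀ u v : G.V, G.reach S u v → (G.cmk (insert e S) u) = (G.cmk (insert e S) v) :=
    fun u v h => cmk_eq_iff.mpr (reach_mono (Finset.subset_insert _ _) h)
  let h0 : G.V → Q' := G.cmk (insert e S)
  have key : ∀ u v : G.V, G.cmk (insert e S) u = G.cmk (insert e S) v ↔
      (G.reach S u v ∨ (G.reach S u a ∧ G.reach S b v) ∨ (G.reach S u b ∧ G.reach S a v)) := by
    intro u v
    rw [cmk_eq_iff, reach_insert_iff hj]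
  let f : {z : Q // z ≠ G.cmk S b} → Q' := fun z => Quotient.lift h0 (by
    intro u v h
    exact resp u v h) z.1
  have hf : ∀ (v : G.V) (h : G.cmk S v ≠ G.cmk S b), f ⟨G.cmk S v, h⟩ = G.cmk (insert e S) v :=
    fun v h => rfl
  have finj : Function.Injective f := by
    rintro ⟨z, hz⟩ ⟨w, hw⟩ hzw
    obtain ⟨u, rfl⟩ := cmk_surjective S z
    obtain ⟨v, rfl⟩ := cmk_surjective S w
    rw [hf, hf] at hzw
    rcases (key u v).mp hzw with h | ⟨h1, h2⟩ | ⟨h1, h2⟩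
    · exact Subtype.ext (cmk_eq_iff.mpr h)
    · exact absurd (cmk_eq_iff.mpr (reach_symm h2)) hw
    · exact absurd (cmk_eq_iff.mpr h1) hz
  have fsurj : Function.Surjective f := by
    intro z
    obtain ⟨v, rfl⟩ := cmk_surjective (insert e S) z
    by_cases hv : G.reach S b v
    · have hane : G.cmk S a ≠ G.cmk S b := fun h => hab (cmk_eq_iff.mp h)
      refine ⟨⟨G.cmk S a, hane⟩, ?_⟩
      rw [hf]
      refine cmk_eq_iff.mpr ?_
      refine reach_trans (reach_of_step ⟨e, Finset.mem_insert_self _ _, hj⟩)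
        (reach_mono (Finset.subset_insert _ _) hv)
    · have hne : G.cmk S v ≠ G.cmk S b := fun h => hv (reach_symm (cmk_eq_iff.mp h))
      exact ⟨⟨G.cmk S v, hne⟩, rfl⟩
  have hcard : Nat.card Q' = Nat.card {z : Q // z ≠ G.cmk S b} :=
    (Nat.card_congr (Equiv.ofBijective f ⟨finj, fsurj⟩)).symm
  have hsplit : Nat.card Q = Nat.card {z : Q // z = G.cmk S b} + Nat.card {z : Q // z ≠ G.cmk S b} := by
    have h2 := Nat.card_congr (Equiv.sumCompl (fun z : Q => z = G.cmk S b))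
    rw [Nat.card_sum] at h2
    exact h2.symm
  have hone : Nat.card {z : Q // z = G.cmk S b} = 1 := by
    rw [Nat.card_eq_one_iff_unique]
    constructor
    · constructor
      rintro ⟨z, rfl⟩ ⟨w, hw⟩
      exact Subtype.ext hw.symm
    · exact ⟨⟨_, rfl⟩⟩
  rw [ncomp_def, ncomp_def, hcard, hsplit, hone]
  omega

lemma reach_empty {u v : G.V} (h : G.reach (∅ : Finset G.E) u v) : u = v := by
  induction h with
  | rel p r hpr => exact absurd hpr.choose_spec.1 (by simp)
  | refl p => rfl
  | symm p r _ ih => exact ih.symm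
  | trans p r s _ _ ih1 ih2 => exact ih1.trans ih2

lemma ncomp_empty : G.ncomp (∅ : Finset G.E) = Fintype.card G.V := by
  have hbij : Function.Bijective (G.cmk ∅) := by
    constructor
    · intro u v h
      exact reach_empty (cmk_eq_iff.mp h)
    · exact cmk_surjective _
  rw [ncomp_def, ← Nat.card_congr (Equiv.ofBijective _ hbij), Nat.card_eq_fintype_card]

lemma card_le_ncomp_add_card (S : Finset G.E) :
    Fintype.card G.V ≤ G.ncomp S + S.card := by
  classical
  induction S using Finset.induction_on with
  | empty => simp [ncomp_empty]
  | @insert e S heS ih =>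
    have hj : G.Joins e (G.fst e) (G.snd e) := Or.inl ⟨rfl, rfl⟩
    rw [Finset.card_insert_of_notMem heS]
    by_cases h : G.reach S (G.fst e) (G.snd e)
    · rw [ncomp_insert_of_reach hj h]; omega
    · have := ncomp_insert_of_not_reach hj h; omega

lemma reach_of_ncomp_one {S : Finset G.E} (h : G.ncomp S = 1) (u v : G.V) :
    G.reach S u v := by
  rw [ncomp_def, Nat.card_eq_one_iff_unique] at h
  have := h.1
  exact cmk_eq_iff.mp (Subsingleton.elim _ _)

end Multigraph
namespace Multigraph

variable {G : Multigraph}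

lemma joins_fst_snd (e : G.E) : G.Joins e (G.fst e) (G.snd e) := Or.inl ⟨rfl, rfl⟩

lemma tree_no_cycle {T : Finset G.E} (hT : G.IsSpanningTree T) {e : G.E} (he : e ∈ T) :
    ¬ G.reach (T.erase e) (G.fst e) (G.snd e) := by
  intro h
  have hins : insert e (T.erase e) = T := Finset.insert_erase he
  have h1 : G.ncomp (insert e (T.erase e)) = G.ncomp (T.erase e) :=
    ncomp_insert_of_reach (joins_fst_snd e) h
  rw [hins] at h1
  have h2 := card_le_ncomp_add_card (G := G) (T.erase e)
  have h3 : (T.erase e).card + 1 = T.card := Finset.card_erase_add_one he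
  have := hT.1
  have := hT.2
  omega

lemma erase_two_forest {T : Finset G.E} (hT : G.IsSpanningTree T) {e : G.E} (he : e ∈ T) :
    G.IsTwoForest (T.erase e) := by
  have hnr := tree_no_cycle hT he
  have hins : insert e (T.erase e) = T := Finset.insert_erase he
  have h1 : G.ncomp (insert e (T.erase e)) + 1 = G.ncomp (T.erase e) :=
    ncomp_insert_of_not_reach (joins_fst_snd e) hnr
  rw [hins] at h1
  have h3 : (T.erase e).card + 1 = T.card := Finset.card_erase_add_one he
  have := hT.1
  have := hT.2
  exact ⟨by omega, by omega⟩

lemma not_reach_of_joins {F : Finset G.E} {x y q : G.V}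
    (hqx : ¬ G.reach F q x) (hqy : G.reach F q y) : ¬ G.reach F x y :=
  fun h => hqx (reach_trans hqy (reach_symm h))

lemma insert_spanning_tree {F : Finset G.E} (hF : G.IsTwoForest F) {e : G.E}
    (hnr : ¬ G.reach F (G.fst e) (G.snd e)) : G.IsSpanningTree (insert e F) := by
  have heF : e ∉ F := fun h => hnr (reach_of_step ⟨e, h, joins_fst_snd e⟩)
  have h1 : G.ncomp (insert e F) + 1 = G.ncomp F :=
    ncomp_insert_of_not_reach (joins_fst_snd e) hnr
  have h2 : (insert e F).card = F.card + 1 := Finset.card_insert_of_notMem heF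
  have := hF.1
  have := hF.2
  exact ⟨by omega, by omega⟩

lemma mem_not_mem_of_joins {F : Finset G.E} {e : G.E} {x y q : G.V} (hj : G.Joins e x y)
    (hqx : ¬ G.reach F q x) (hqy : G.reach F q y) : e ∉ F := by
  intro h
  exact not_reach_of_joins hqx hqy (reach_of_step ⟨e, h, hj⟩)

/-- Existence of a spanning tree inside any connected edge set. -/
lemma exists_spanning_tree : ∀ (S : Finset G.E), G.ncomp S = 1 →
    ∃ T : Finset G.E, G.IsSpanningTree T := by
  classical
  intro S
  induction S using Finset.strongInduction with
  | _ S ih =>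
    intro hS
    by_cases h : ∃ e ∈ S, G.reach (S.erase e) (G.fst e) (G.snd e)
    · obtain ⟨e, heS, hre⟩ := h
      refine ih (S.erase e) (Finset.erase_ssubset heS) ?_
      have hins : insert e (S.erase e) = S := Finset.insert_erase heS
      have := ncomp_insert_of_reach (joins_fst_snd e) hre
      rw [hins] at this
      omega
    · push_neg at h
      -- all edges are bridges: ncomp S + S.card = card V
      have key : ∀ (R : Finset G.E), (∀ e ∈ R, ¬ G.reach (R.erase e) (G.fst e) (G.snd e)) →
          G.ncomp R + R.card = Fintype.card G.V := by
        intro R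
        induction R using Finset.induction_on with
        | empty => intro _; simp [ncomp_empty]
        | @insert e R heR ihR =>
          intro hbr
          have he' : ¬ G.reach ((insert e R).erase e) (G.fst e) (G.snd e) :=
            hbr e (Finset.mem_insert_self _ _)
          rw [Finset.erase_insert heR] at he'
          have h1 : G.ncomp (insert e R) + 1 = G.ncomp R :=
            ncomp_insert_of_not_reach (joins_fst_snd e) he'
          have h2 : ∀ f ∈ R, ¬ G.reach (R.erase f) (G.fst f) (G.snd f) := by
            intro f hf hr
            refine hbr f (Finset.mem_insert_of_mem hf) ?_
            refine reach_mono ?_ hr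
            intro g hg
            rw [Finset.mem_erase] at hg ⊢
            exact ⟨hg.1, Finset.mem_insert_of_mem hg.2⟩
          have := ihR h2
          rw [Finset.card_insert_of_notMem heR]
          omega
      have := key S h
      exact ⟨S, hS, by omega⟩

lemma kappa_pos (hG : G.IsConnected) : 0 < G.kappa := by
  obtain ⟨T, hT⟩ := exists_spanning_tree (Finset.univ : Finset G.E) hG
  have : Nonempty {S : Finset G.E // G.IsSpanningTree S} := ⟨⟨T, hT⟩⟩
  exact Nat.card_pos

/-- Existence of a separating edge at `x` in a spanning tree. -/
lemma exists_sep_edge {T : Finset G.E} (hT : G.IsSpanningTree T) {x q : G.V} (hxq : x ≠ q) :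
    ∃ e ∈ T, ∃ y, G.Joins e x y ∧ ¬ G.reach (T.erase e) x q := by
  classical
  set S₀ : Finset G.E := T.filter (fun e => ¬(G.fst e = x ∨ G.snd e = x)) with hS₀
  have hreach : G.reach T x q := reach_of_ncomp_one hT.1 x q
  have hrtg := reach_iff_rtg.mp hreach
  have claim : ∀ v, Relation.ReflTransGen (G.step T) x v →
      v = x ∨ ∃ e ∈ T, ∃ y, G.Joins e x y ∧ G.reach S₀ y v := by
    intro v hv
    induction hv with
    | refl => exact Or.inl rfl
    | tail hseg hstep ih =>
      rename_i w v'
      obtain ⟨f, hfT, hjf⟩ := hstep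
      by_cases hv'x : v' = x
      · exact Or.inl hv'x
      rcases ih with rfl | ⟨e, heT, y, hj, hry⟩
      · -- step from x to v' via f
        exact Or.inr ⟨f, hfT, v', hjf, reach_refl _ _⟩
      · by_cases hwx : w = x
        · subst hwx
          exact Or.inr ⟨f, hfT, v', hjf, reach_refl _ _⟩
        · -- f is not incident to x
          have hfS₀ : f ∈ S₀ := by
            rw [hS₀, Finset.mem_filter]
            refine ⟨hfT, ?_⟩
            rintro (h | h) <;> rcases hjf with ⟨h1, h2⟩ | ⟨h1, h2⟩
            · exact hwx (h1 ▸ h)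
            · exact hv'x (h1 ▸ h)
            · exact hv'x (h2 ▸ h)
            · exact hwx (h2 ▸ h)
          exact Or.inr ⟨e, heT, y, hj, reach_trans hry (reach_of_step ⟨f, hfS₀, hjf⟩)⟩
  rcases claim q hrtg with rfl | ⟨e, heT, y, hj, hry⟩
  · exact absurd rfl hxq
  · refine ⟨e, heT, y, hj, ?_⟩
    intro hxqr
    have hS₀sub : S₀ ⊆ T.erase e := by
      intro g hg
      rw [hS₀, Finset.mem_filter] at hg
      rw [Finset.mem_erase]
      refine ⟨?_, hg.1⟩
      rintro rfl
      rcases hj with ⟨h1, _⟩ | ⟨_, h2⟩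
      · exact hg.2 (Or.inl h1)
      · exact hg.2 (Or.inr h2)
    have hxy : G.reach (T.erase e) x y :=
      reach_trans hxqr (reach_symm (reach_mono hS₀sub hry))
    have := tree_no_cycle hT heT
    rcases hj with ⟨h1, h2⟩ | ⟨h1, h2⟩
    · exact this (h1 ▸ h2 ▸ hxy)
    · exact this (h2 ▸ h1 ▸ (reach_symm hxy))

end Multigraph
namespace Multigraph

variable {G : Multigraph}

lemma insert_eq_cancel {e : G.E} {F F' : Finset G.E} (h : insert e F = insert e F')
    (heF : e ∉ F) (heF' : e ∉ F') : F = F' := by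
  ext g
  constructor
  · intro hg
    have : g ∈ insert e F' := h ▸ Finset.mem_insert_of_mem hg
    rcases Finset.mem_insert.mp this with rfl | hg'
    · exact absurd hg heF
    · exact hg'
  · intro hg
    have : g ∈ insert e F := h.symm ▸ Finset.mem_insert_of_mem hg
    rcases Finset.mem_insert.mp this with rfl | hg'
    · exact absurd hg heF'
    · exact hg'

/-- The uniqueness argument: two distinct separating edges are impossible. -/
lemma uniq_edge {F F' : Finset G.E} {e e' : G.E} {x y y' q : G.V}
    (he : G.Joins e x y) (he' : G.Joins e' x y')
    (hins : insert e F = insert e' F') (hne : e ≠ e')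
    (heF : e ∉ F) (he'F' : e' ∉ F')
    (hFqx : ¬ G.reach F q x) (hFqy : G.reach F q y)
    (hF'qx : ¬ G.reach F' q x) (hF'qy : G.reach F' q y') : False := by
  classical
  have he'F : e' ∈ F := by
    have : e' ∈ insert e F := by rw [hins]; exact Finset.mem_insert_self _ _
    rcases Finset.mem_insert.mp this with h | h
    · exact absurd h.symm hne
    · exact h
  have heF' : e ∈ F' := by
    have : e ∈ insert e' F' := by rw [← hins]; exact Finset.mem_insert_self _ _
    rcases Finset.mem_insert.mp this with h | h
    · exact absurd h hne
    · exact h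
  set F'' := F.erase e' with hF''
  have hFins : insert e' F'' = F := Finset.insert_erase he'F
  have hF'ins : insert e F'' = F' := by
    have h1 : (insert e F).erase e' = insert e (F.erase e') :=
      Finset.erase_insert_of_ne hne
    rw [hins, Finset.erase_insert he'F'] at h1
    rw [← h1]
  have hsubF : F'' ⊆ F := Finset.erase_subset _ _
  have hsubF' : F'' ⊆ F' := by rw [← hF'ins]; exact Finset.subset_insert _ _
  -- first component fact: reach F'' y q
  have h1 : G.reach F'' y q := by
    have hyq : G.reach (insert e' F'') y q := by rw [hFins]; exact reach_symm hFqy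
    rcases (reach_insert_iff he').mp hyq with h | ⟨ha, hb⟩ | ⟨ha, hb⟩
    · exact h
    · -- reach F'' y x ∧ reach F'' y' q
      exact absurd (reach_trans hFqy (reach_mono hsubF ha)) hFqx
    · -- reach F'' y y' ∧ reach F'' x q
      exact absurd (reach_symm (reach_mono hsubF hb)) hFqx
  have h2 : G.reach F'' y' q := by
    have hyq : G.reach (insert e F'') y' q := by rw [hF'ins]; exact reach_symm hF'qy
    rcases (reach_insert_iff he).mp hyq with h | ⟨ha, hb⟩ | ⟨ha, hb⟩
    · exact h
    · exact absurd (reach_trans hF'qy (reach_mono hsubF' ha)) hF'qx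
    · exact absurd (reach_symm (reach_mono hsubF' hb)) hF'qx
  have hyy' : G.reach F y y' := reach_mono hsubF (reach_trans h1 (reach_symm h2))
  have hxy' : G.reach F x y' := reach_of_step ⟨e', he'F, he'⟩
  exact hFqx (reach_trans (reach_trans hFqy hyy') (reach_symm hxy'))

/-- The predicate for the sigma-type counting. -/
def Pred (G : Multigraph) (x q : G.V) (e : G.E) (F : Finset G.E) : Prop :=
  G.IsTwoForest F ∧ ¬ G.reach F q x ∧
    ((G.fst e = x ∧ G.reach F q (G.snd e)) ∨ (G.snd e = x ∧ G.reach F q (G.fst e)))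

lemma pred_extract {x q : G.V} {e : G.E} {F : Finset G.E} (h : G.Pred x q e F) :
    ∃ y, G.Joins e x y ∧ G.reach F q y := by
  rcases h.2.2 with ⟨h1, h2⟩ | ⟨h1, h2⟩
  · exact ⟨G.snd e, Or.inl ⟨h1, rfl⟩, h2⟩
  · exact ⟨G.fst e, Or.inr ⟨rfl, h1⟩, h2⟩

lemma pred_not_reach {x q : G.V} {e : G.E} {F : Finset G.E} (h : G.Pred x q e F) :
    ¬ G.reach F (G.fst e) (G.snd e) := by
  obtain ⟨y, hj, hqy⟩ := pred_extract h
  have hnr : ¬ G.reach F x y := not_reach_of_joins h.2.1 hqy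
  rcases hj with ⟨h1, h2⟩ | ⟨h1, h2⟩
  · rw [h1, h2]; exact hnr
  · rw [h1, h2]; exact fun hr => hnr (reach_symm hr)

lemma pred_not_mem {x q : G.V} {e : G.E} {F : Finset G.E} (h : G.Pred x q e F) :
    e ∉ F := fun hm => pred_not_reach h (reach_of_step ⟨e, hm, joins_fst_snd e⟩)

noncomputable def Phi (G : Multigraph) (x q : G.V) :
    ((e : G.E) × {F : Finset G.E // G.Pred x q e F}) → {T : Finset G.E // G.IsSpanningTree T} :=
  fun p => ⟨insert p.1 p.2.1, insert_spanning_tree p.2.2.1 (pred_not_reach p.2.2)⟩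

lemma phi_bijective (hG : G.IsConnected) {x q : G.V} (hxq : x ≠ q) :
    Function.Bijective (G.Phi x q) := by
  constructor
  · rintro ⟨e, F, hF⟩ ⟨e', F', hF'⟩ h
    have hins : insert e F = insert e' F' := congrArg Subtype.val h
    by_cases hee' : e = e'
    · subst hee'
      have : F = F' := insert_eq_cancel hins (pred_not_mem hF) (pred_not_mem hF')
      subst this
      rfl
    · exfalso
      obtain ⟨y, hj, hqy⟩ := pred_extract hF
      obtain ⟨y', hj', hqy'⟩ := pred_extract hF'
      exact uniq_edge hj hj' hins hee' (pred_not_mem hF) (pred_not_mem hF')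
        hF.2.1 hqy hF'.2.1 hqy'
  · rintro ⟨T, hT⟩
    obtain ⟨e, heT, y, hj, hnr⟩ := exists_sep_edge hT hxq
    set F := T.erase e with hFdef
    have hins : insert e F = T := Finset.insert_erase heT
    have hTF : G.IsTwoForest F := erase_two_forest hT heT
    have hyq : G.reach F y q := by
      have : G.reach (insert e F) y q := by
        rw [hins]; exact reach_of_ncomp_one hT.1 y q
      rcases (reach_insert_iff hj).mp this with h | ⟨ha, hb⟩ | ⟨ha, hb⟩
      · exact h
      · exact hb
      · exact absurd hb hnr
    have hqx : ¬ G.reach F q x := fun h => hnr (reach_symm h)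
    have hpred : G.Pred x q e F := by
      refine ⟨hTF, hqx, ?_⟩
      rcases hj with ⟨h1, h2⟩ | ⟨h1, h2⟩
      · exact Or.inl ⟨h1, h2 ▸ reach_symm hyq⟩
      · exact Or.inr ⟨h2, h1 ▸ reach_symm hyq⟩
    exact ⟨⟨e, F, hpred⟩, Subtype.ext hins⟩

lemma kappa2Tog_eq_card (x y q : G.V) :
    G.kappa2Tog x y q =
      Nat.card {S : Finset G.E // G.IsTwoForest S ∧ G.reach S x y ∧ ¬ G.reach S x q} := rfl

lemma per_edge_card {x q : G.V} (e : G.E) :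
    Nat.card {F : Finset G.E // G.Pred x q e F} =
      (if G.fst e = x then G.kappa2Tog q (G.snd e) x else 0) +
      (if G.snd e = x then G.kappa2Tog q (G.fst e) x else 0) := by
  classical
  by_cases h1 : G.fst e = x
  · have h2 : ¬ G.snd e = x := fun h => G.no_loop e (h1.trans h.symm)
    rw [if_pos h1, if_neg h2, add_zero, kappa2Tog_eq_card]
    refine Nat.card_congr (Equiv.subtypeEquivRight fun F => ?_)
    unfold Pred
    constructor
    · rintro ⟨hF, hqx, ⟨_, hr⟩ | ⟨hx, _⟩⟩
      · exact ⟨hF, hr, hqx⟩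
      · exact absurd hx h2
    · rintro ⟨hF, hr, hqx⟩
      exact ⟨hF, hqx, Or.inl ⟨h1, hr⟩⟩
  · by_cases h2 : G.snd e = x
    · rw [if_neg h1, if_pos h2, zero_add, kappa2Tog_eq_card]
      refine Nat.card_congr (Equiv.subtypeEquivRight fun F => ?_)
      unfold Pred
      constructor
      · rintro ⟨hF, hqx, ⟨hx, _⟩ | ⟨_, hr⟩⟩
        · exact absurd hx h1
        · exact ⟨hF, hr, hqx⟩
      · rintro ⟨hF, hr, hqx⟩
        exact ⟨hF, hqx, Or.inr ⟨h2, hr⟩⟩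
    · rw [if_neg h1, if_neg h2, add_zero]
      have : IsEmpty {F : Finset G.E // G.Pred x q e F} := by
        refine ⟨fun ⟨F, hF⟩ => ?_⟩
        rcases hF.2.2 with ⟨hx, _⟩ | ⟨hx, _⟩
        · exact h1 hx
        · exact h2 hx
      exact Nat.card_of_isEmpty

lemma key_nat (hG : G.IsConnected) {x q : G.V} (hxq : x ≠ q) :
    (∑ e : G.E, ((if G.fst e = x then G.kappa2Tog q (G.snd e) x else 0) +
      (if G.snd e = x then G.kappa2Tog q (G.fst e) x else 0))) = G.kappa := by
  classical
  have hsig : Nat.card ((e : G.E) × {F : Finset G.E // G.Pred x q e F}) = G.kappa :=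
    Nat.card_congr (Equiv.ofBijective _ (phi_bijective hG hxq))
  rw [← hsig, Nat.card_eq_fintype_card, Fintype.card_sigma]
  refine Finset.sum_congr rfl fun e _ => ?_
  rw [← Nat.card_eq_fintype_card, per_edge_card]

lemma kappa2Tog_self (y q : G.V) : G.kappa2Tog q y q = 0 := by
  have : IsEmpty {S : Finset G.E // G.IsTwoForest S ∧ G.reach S q y ∧ ¬ G.reach S q q} :=
    ⟨fun ⟨S, hS⟩ => hS.2.2 (reach_refl _ _)⟩
  exact Nat.card_of_isEmpty

end Multigraph
theorem potential_neighbor_sum (G : Multigraph) (hG : G.IsConnected) (x q : G.V) :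
    (x ≠ q →
      (∑ e : G.E, ((if G.fst e = x then G.jfun x q (G.snd e) else 0) +
        (if G.snd e = x then G.jfun x q (G.fst e) else 0))) = 1) ∧
    (x = q →
      (∑ e : G.E, ((if G.fst e = x then G.jfun x q (G.snd e) else 0) +
        (if G.snd e = x then G.jfun x q (G.fst e) else 0))) = 0) := by
  classical
  have hk : (G.kappa : ℝ) ≠ 0 := by
    have := Multigraph.kappa_pos hG
    positivity
  constructor
  · intro hxq
    have hterm : ∀ e : G.E,
        ((if G.fst e = x then G.jfun x q (G.snd e) else 0) +
          (if G.snd e = x then G.jfun x q (G.fst e) else 0)) =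
        (((if G.fst e = x then (G.kappa2Tog q (G.snd e) x : ℕ) else 0) +
          (if G.snd e = x then (G.kappa2Tog q (G.fst e) x : ℕ) else 0) : ℕ) : ℝ) /
          (G.kappa : ℝ) := by
      intro e
      unfold Multigraph.jfun
      push_cast
      rw [add_div]
      congr 1 <;> split_ifs <;> simp
    rw [Finset.sum_congr rfl fun e _ => hterm e, ← Finset.sum_div]
    rw [← Nat.cast_sum, Multigraph.key_nat hG hxq, div_self hk]
  · intro hxq
    subst hxq
    refine Finset.sum_eq_zero fun e _ => ?_
    have hz : ∀ y : G.V, G.jfun x x y = 0 := by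
      intro y
      unfold Multigraph.jfun
      rw [Multigraph.kappa2Tog_self]
      simp
    rw [hz, hz]
    split_ifs <;> simp
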